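/- arXiv:2210.03336 — 12 statements merged into one kernel-verified Lean document; each statement's English description precedes it below -/
import Mathlib

section
/- Let G be a finite group and X a normal subset of G. The Cayley sum graph CS(G,X) is connected if and only if G = ⟨X⟩ and the index of ⟨X⁻¹X⟩ in G is at most 2. -/
def caySum (G : Type*) [Group G] (X : Set G) : SimpleGraph G :=
  SimpleGraph.fromRel (fun g h => g * h ∈ X)

def IsNormalSet {G : Type*} [Group G] (X : Set G) : Prop :=
  ∀ g x : G, x ∈ X → g⁻¹ * x * g ∈ X

def IsPerfectCode {V : Type*} (Γ : SimpleGraph V) (C : Set V) : Prop :=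
  (∀ u ∈ C, ∀ v ∈ C, ¬ Γ.Adj u v) ∧ ∀ v ∉ C, ∃! u, u ∈ C ∧ Γ.Adj v u

def IsTotalPerfectCode {V : Type*} (Γ : SimpleGraph V) (C : Set V) : Prop :=
  ∀ v, ∃! u, u ∈ C ∧ Γ.Adj v u

def IsLeftTransversal {G : Type*} [Group G] (T : Set G) (H : Subgroup G) : Prop :=
  ∀ g : G, ∃! t, t ∈ T ∧ g⁻¹ * t ∈ H

section Aux
open scoped Pointwise
variable {G : Type*} [Group G] {X : Set G} (hX : IsNormalSet X)

lemma csWalkInv {P : G → Prop} (hP : ∀ a b, (caySum G X).Adj a b → P a → P b)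
    {a b : G} (h : (caySum G X).Reachable a b) (ha : P a) : P b := by
  obtain ⟨w⟩ := h
  induction w with
  | nil => exact ha
  | cons h p ih => exact ih (hP _ _ h ha)

include hX

lemma hXconj {g w : G} (hw : w ∈ X) : g * w * g⁻¹ ∈ X := by
  have := hX g⁻¹ w hw
  rwa [inv_inv] at this

lemma csAdjMem {a b : G} (h : (caySum G X).Adj a b) : a * b ∈ X := by
  rw [caySum, SimpleGraph.fromRel_adj] at h
  rcases h.2 with h' | h'
  · exact h'
  · have e : b⁻¹ * (b * a) * b = a * b := by group
    have := hX b (b * a) h'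
    rwa [e] at this

omit hX in
lemma csPseudoStep {a x : G} (hx : x ∈ X) : (caySum G X).Reachable a (a⁻¹ * x) := by
  by_cases hab : a = a⁻¹ * x
  · rw [← hab]
  · refine SimpleGraph.Adj.reachable ?_
    rw [caySum, SimpleGraph.fromRel_adj]
    exact ⟨hab, Or.inl (by rwa [mul_inv_cancel_left])⟩

lemma csTwoStep {a x y : G} (hx : x ∈ X) (hy : y ∈ X) :
    (caySum G X).Reachable a (a * (x⁻¹ * y)) := by
  have h1 : a * x * a⁻¹ ∈ X := hXconj hX hx
  have r1 : (caySum G X).Reachable a (a⁻¹ * (a * x * a⁻¹)) := csPseudoStep h1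
  have r2 := csPseudoStep (a := a⁻¹ * (a * x * a⁻¹)) hy
  have e : (a⁻¹ * (a * x * a⁻¹))⁻¹ * y = a * (x⁻¹ * y) := by group
  rw [e] at r2
  exact r1.trans r2

lemma csReachMulH {h : G} (hh : h ∈ Subgroup.closure (X⁻¹ * X)) :
    ∀ a : G, (caySum G X).Reachable a (a * h) := by
  induction hh using Subgroup.closure_induction with
  | mem z hz =>
    obtain ⟨u, hu, v, hv, huv⟩ := hz
    rw [Set.mem_inv] at hu
    intro a
    have := csTwoStep hX (a := a) (x := u⁻¹) (y := v) hu hv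
    change u * v = z at huv
    rwa [inv_inv, huv] at this
  | one => intro a; rw [mul_one]
  | mul h₁ h₂ _ _ ih₁ ih₂ =>
    intro a
    have := ih₂ (a * h₁)
    rw [mul_assoc] at this
    exact (ih₁ a).trans this
  | inv h _ ih =>
    intro a
    have := ih (a * h⁻¹)
    rw [inv_mul_cancel_right] at this
    exact this.symm

lemma csHNormal : (Subgroup.closure (X⁻¹ * X)).Normal := by
  constructor
  intro n hn g
  induction hn using Subgroup.closure_induction with
  | mem z hz =>
    obtain ⟨u, hu, v, hv, huv⟩ := hz
    rw [Set.mem_inv] at hu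
    refine Subgroup.subset_closure ?_
    refine ⟨(g * u⁻¹ * g⁻¹)⁻¹, ?_, g * v * g⁻¹, hXconj hX hv, ?_⟩
    · rw [Set.mem_inv, inv_inv]; exact hXconj hX hu
    · change u * v = z at huv
      subst huv; group
  | one => simpa using Subgroup.one_mem _
  | mul a b _ _ iha ihb =>
    have e : g * (a * b) * g⁻¹ = (g * a * g⁻¹) * (g * b * g⁻¹) := by group
    rw [e]; exact Subgroup.mul_mem _ iha ihb
  | inv a _ iha =>
    have e : g * a⁻¹ * g⁻¹ = (g * a * g⁻¹)⁻¹ := by group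
    rw [e]; exact Subgroup.inv_mem _ iha

end Aux

open scoped Pointwise in
theorem cayleySum_connected_iff {G : Type*} [Group G] [Finite G] (X : Set G)
    (hX : IsNormalSet X) :
    (caySum G X).Connected ↔
      Subgroup.closure X = ⊤ ∧ (Subgroup.closure (X⁻¹ * X)).index ≤ 2 := by
  set H := Subgroup.closure (X⁻¹ * X) with hHdef
  haveI hN : H.Normal := csHNormal hX
  constructor
  · intro hconn
    have hclos : Subgroup.closure X = ⊤ := by
      rw [Subgroup.eq_top_iff']
      intro g
      refine csWalkInv (P := fun a => a ∈ Subgroup.closure X) ?_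
        (hconn.preconnected 1 g) (Subgroup.one_mem _)
      intro a b hadj ha
      have hab : a * b ∈ X := csAdjMem hX hadj
      have e : b = a⁻¹ * (a * b) := by group
      rw [e]
      exact Subgroup.mul_mem _ (Subgroup.inv_mem _ ha) (Subgroup.subset_closure hab)
    refine ⟨hclos, ?_⟩
    rcases Set.eq_empty_or_nonempty X with hE | ⟨x₀, hx₀⟩
    · subst hE
      have hbt : (⊥ : Subgroup G) = ⊤ := by rw [← Subgroup.closure_empty]; exact hclos
      have hsub : Subsingleton G := by
        constructor
        intro a b
        have ha : a ∈ (⊥ : Subgroup G) := by rw [hbt]; trivial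
        have hb : b ∈ (⊥ : Subgroup G) := by rw [hbt]; trivial
        rw [Subgroup.mem_bot] at ha hb
        rw [ha, hb]
      have hcard : Nat.card G = 1 := Nat.card_eq_one_iff_unique.mpr ⟨hsub, ⟨1⟩⟩
      have := Subgroup.index_dvd_card (H := H)
      rw [hcard] at this
      exact le_trans (Nat.le_of_dvd one_pos this) (by norm_num)
    · have hx0ab : ∀ y ∈ X, x₀⁻¹ * y ∈ H :=
        fun y hy => Subgroup.subset_closure ⟨x₀⁻¹, Set.inv_mem_inv.mpr hx₀, y, hy, rfl⟩
      have hinv : ∀ g, g ∈ H ∨ x₀⁻¹ * g ∈ H := by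
        intro g
        refine csWalkInv (P := fun a => a ∈ H ∨ x₀⁻¹ * a ∈ H) ?_
          (hconn.preconnected 1 g) (Or.inl (Subgroup.one_mem _))
        intro a b hadj hPa
        have hab : a * b ∈ X := csAdjMem hX hadj
        have hmem : x₀⁻¹ * (a * b) ∈ H := hx0ab _ hab
        rcases hPa with ha | ha
        · right
          have e : x₀⁻¹ * b = (x₀⁻¹ * a⁻¹ * (x₀⁻¹)⁻¹) * (x₀⁻¹ * (a * b)) := by group
          rw [e]
          exact Subgroup.mul_mem _ (hN.conj_mem a⁻¹ (Subgroup.inv_mem _ ha) x₀⁻¹) hmem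
        · left
          have e : b = (x₀⁻¹ * a)⁻¹ * (x₀⁻¹ * (a * b)) := by group
          rw [e]
          exact Subgroup.mul_mem _ (Subgroup.inv_mem _ ha) hmem
      have hsurj : Function.Surjective
          (fun b : Bool => if b then (QuotientGroup.mk x₀ : G ⧸ H) else 1) := by
        intro q
        obtain ⟨g, rfl⟩ := QuotientGroup.mk_surjective q
        rcases hinv g with hg | hg
        · exact ⟨false, by simpa using ((QuotientGroup.eq_one_iff g).mpr hg).symm⟩
        · exact ⟨true, by simpa using (QuotientGroup.eq.mpr hg)⟩
      have : Nat.card (G ⧸ H) ≤ Nat.card Bool := Nat.card_le_card_of_surjective _ hsurj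
      simpa [Subgroup.index, Nat.card_eq_fintype_card] using this
  · rintro ⟨hclos, hidx⟩
    rcases Set.eq_empty_or_nonempty X with hE | ⟨x₀, hx₀⟩
    · subst hE
      have hbt : (⊥ : Subgroup G) = ⊤ := by rw [← Subgroup.closure_empty]; exact hclos
      rw [SimpleGraph.connected_iff]
      refine ⟨?_, ⟨1⟩⟩
      intro a b
      have ha : a ∈ (⊥ : Subgroup G) := by rw [hbt]; trivial
      have hb : b ∈ (⊥ : Subgroup G) := by rw [hbt]; trivial
      rw [Subgroup.mem_bot] at ha hb
      rw [ha, hb]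
    · -- every coset is H or x₀H
      set q₀ : G ⧸ H := QuotientGroup.mk x₀ with hq₀
      have hz : ∀ q : G ⧸ H, q ∈ Subgroup.zpowers q₀ := by
        have hmap : Subgroup.map (QuotientGroup.mk' H) (Subgroup.closure X) = ⊤ := by
          rw [hclos]
          exact Subgroup.map_top_of_surjective _ (QuotientGroup.mk'_surjective H)
        rw [MonoidHom.map_closure] at hmap
        have hsub : (QuotientGroup.mk' H) '' X ⊆ (Subgroup.zpowers q₀ : Set (G ⧸ H)) := by
          rintro _ ⟨x, hx, rfl⟩
          have hxq : (QuotientGroup.mk' H) x = q₀ := by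
            refine (QuotientGroup.eq.mpr ?_)
            exact Subgroup.subset_closure ⟨x⁻¹, Set.inv_mem_inv.mpr hx, x₀, hx₀, rfl⟩
          rw [hxq]
          exact Subgroup.mem_zpowers q₀
        intro q
        have : q ∈ Subgroup.closure ((QuotientGroup.mk' H) '' X) := by rw [hmap]; trivial
        exact (Subgroup.closure_le _).mpr hsub this
      have hq2 : q₀ ^ (2 : ℕ) = 1 := by
        have hdvd : orderOf q₀ ∣ Nat.card (G ⧸ H) := orderOf_dvd_natCard q₀
        have hpos : 0 < H.index := Nat.pos_of_ne_zero (Subgroup.index_ne_zero_of_finite)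
        have hcardeq : Nat.card (G ⧸ H) = H.index := rfl
        rw [hcardeq] at hdvd
        have h2 : orderOf q₀ ∣ 2 := by
          interval_cases h : H.index
          · exact hdvd.trans (by norm_num)
          · exact hdvd
        exact orderOf_dvd_iff_pow_eq_one.mp h2
      have hinv : ∀ g : G, g ∈ H ∨ x₀⁻¹ * g ∈ H := by
        intro g
        obtain ⟨n, hn⟩ := hz (QuotientGroup.mk g)
        change q₀ ^ n = _ at hn
        rcases Int.even_or_odd n with ⟨k, hk⟩ | ⟨k, hk⟩
        · left
          have : q₀ ^ n = 1 := by
            rw [hk, ← two_mul, zpow_mul]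
            rw [← zpow_natCast q₀ 2] at hq2
            push_cast at hq2 ⊢
            rw [hq2, one_zpow]
          rw [this] at hn
          exact (QuotientGroup.eq_one_iff g).mp hn.symm
        · right
          have : q₀ ^ n = q₀ := by
            rw [hk, zpow_add, zpow_mul, zpow_one]
            rw [← zpow_natCast q₀ 2] at hq2
            push_cast at hq2 ⊢
            rw [hq2, one_zpow, one_mul]
          rw [this] at hn
          exact QuotientGroup.eq.mp hn
      rw [SimpleGraph.connected_iff]
      refine ⟨?_, ⟨1⟩⟩
      have reach1 : ∀ g, (caySum G X).Reachable 1 g := by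
        intro g
        rcases hinv g with hg | hg
        · have := csReachMulH hX hg 1
          rwa [one_mul] at this
        · have r1 : (caySum G X).Reachable 1 x₀ := by
            have := csPseudoStep (a := (1 : G)) hx₀
            rwa [inv_one, one_mul] at this
          have r2 := csReachMulH hX hg x₀
          rw [mul_inv_cancel_left] at r2
          exact r1.trans r2
      intro a b
      exact (reach1 a).symm.trans (reach1 b)
end

section
/- Let G be a finite group and H a subgroup of G. Then H is a perfect code of some Cayley sum graph of G if and only if G has a normal subset X such that X ∪ {1} is a left transversal of H in G. -/
lemma normal_mul_comm {G : Type*} [Group G] {X : Set G} (hX : IsNormalSet X) (g h : G) :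
    g * h ∈ X ↔ h * g ∈ X := by
  constructor
  · intro hm
    have := hX g _ hm
    have e : g⁻¹ * (g * h) * g = h * g := by group
    rwa [e] at this
  · intro hm
    have := hX h _ hm
    have e : h⁻¹ * (h * g) * h = g * h := by group
    rwa [e] at this

lemma normal_sdiff_one {G : Type*} [Group G] {X : Set G} (hX : IsNormalSet X) :
    IsNormalSet (X \ {1}) := by
  intro g x hx
  refine ⟨hX g x hx.1, ?_⟩
  intro h
  apply hx.2
  have : x = g * (g⁻¹ * x * g) * g⁻¹ := by group
  rw [this, h]
  simp

lemma caySum_adj {G : Type*} [Group G] {X : Set G} (hX : IsNormalSet X) (g h : G) :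
    (caySum G X).Adj g h ↔ g ≠ h ∧ g * h ∈ X := by
  rw [caySum, SimpleGraph.fromRel_adj]
  constructor
  · rintro ⟨hne, hm | hm⟩
    · exact ⟨hne, hm⟩
    · exact ⟨hne, (normal_mul_comm hX g h).2 hm⟩
  · rintro ⟨hne, hm⟩
    exact ⟨hne, Or.inl hm⟩

theorem perfectCode_iff_transversal {G : Type*} [Group G] [Finite G] (H : Subgroup G) :
    (∃ X : Set G, IsNormalSet X ∧ IsPerfectCode (caySum G X) (H : Set G)) ↔
      ∃ X : Set G, IsNormalSet X ∧ IsLeftTransversal (X ∪ {1}) H := by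
  constructor
  · rintro ⟨X, hX, hcode⟩
    refine ⟨X \ {1}, normal_sdiff_one hX, ?_⟩
    intro g
    by_cases hg : g ∈ H
    · refine ⟨1, ⟨Or.inr rfl, by simpa using H.inv_mem hg⟩, ?_⟩
      rintro t ⟨ht, htH⟩
      rcases ht with ht | ht
      · -- t ∈ X \ {1}, and t ∈ H: contradiction with code condition (1)
        exfalso
        have htmemH : t ∈ H := by
          have := H.mul_mem hg htH
          simpa using this
        have hadj : (caySum G X).Adj 1 t := by
          rw [caySum_adj hX]
          refine ⟨fun h => ht.2 h.symm, by simpa using ht.1⟩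
        exact hcode.1 1 H.one_mem t htmemH hadj
      · exact ht
    · obtain ⟨u, ⟨huH, hadj⟩, huniq⟩ := hcode.2 g hg
      rw [caySum_adj hX] at hadj
      refine ⟨g * u, ⟨Or.inl ⟨hadj.2, ?_⟩, by simpa using huH⟩, ?_⟩
      · intro h
        apply hg
        have : g = u⁻¹ := by
          have := h
          simp only [Set.mem_singleton_iff] at this
          exact eq_inv_of_mul_eq_one_left this
        rw [this]; exact H.inv_mem huH
      · rintro t ⟨ht, htH⟩
        have ht1 : t ≠ 1 := by
          intro h
          apply hg
          rw [h] at htH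
          simpa using H.inv_mem htH
        have htX : t ∈ X := by
          rcases ht with h | h
          · exact h.1
          · exact absurd h ht1
        have : g⁻¹ * t = u := by
          apply huniq
          refine ⟨htH, ?_⟩
          rw [caySum_adj hX]
          constructor
          · intro h
            apply hg
            rw [h]; exact htH
          · have : g * (g⁻¹ * t) = t := by group
            rw [this]; exact htX
        rw [← this]; group
  · rintro ⟨X, hX, htrans⟩
    refine ⟨X \ {1}, normal_sdiff_one hX, ?_, ?_⟩
    · intro u hu v hv hadj
      rw [caySum_adj (normal_sdiff_one hX)] at hadj
      obtain ⟨hne, hm, hm1⟩ := hadj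
      obtain ⟨t, _, huniq⟩ := htrans 1
      have h1 : (1 : G) = t := by
        apply huniq
        exact ⟨Or.inr rfl, by simpa using H.one_mem⟩
      have h2 : u * v = t := by
        apply huniq
        refine ⟨Or.inl hm, by simpa using H.mul_mem hu hv⟩
      exact hm1 (by rw [h2, ← h1]; rfl)
    · intro v hv
      obtain ⟨t, ⟨htT, htH⟩, huniq⟩ := htrans v
      have ht1 : t ≠ 1 := by
        intro h
        apply hv
        rw [h] at htH
        simpa using H.inv_mem htH
      have htX : t ∈ X := by
        rcases htT with h | h
        · exact h
        · exact absurd h ht1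
      refine ⟨v⁻¹ * t, ⟨htH, ?_⟩, ?_⟩
      · rw [caySum_adj (normal_sdiff_one hX)]
        constructor
        · intro h
          apply hv
          rw [h]; exact htH
        · have e : v * (v⁻¹ * t) = t := by group
          rw [e]; exact ⟨htX, ht1⟩
      · rintro u ⟨huH, hadj⟩
        rw [caySum_adj (normal_sdiff_one hX)] at hadj
        have : v * u = t := by
          apply huniq
          refine ⟨Or.inl hadj.2.1, by simpa using huH⟩
        rw [← this]; group
end

section
/- Let G be a finite group, X a normal subset of G, and H a subgroup of G that is a perfect code of the Cayley sum graph CS(G,X). Then the core of H in G (the largest normal subgroup of G contained in H) is contained in the centralizer C_G(x) of every x ∈ X. -/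
theorem normalCore_le_centralizer_of_perfectCode {G : Type*} [Group G] [Finite G]
    (H : Subgroup G) (X : Set G) (hX : IsNormalSet X)
    (hPC : IsPerfectCode (caySum G X) (H : Set G)) :
    ∀ x ∈ X, ∀ g ∈ H.normalCore, g * x = x * g := by
  intro x hx g hg
  have hgH : g ∈ H := H.normalCore_le hg
  by_cases hx1 : x = 1
  · subst hx1; simp
  -- x ∉ H
  have hxH : x ∉ (H : Set G) := by
    intro hxmem
    refine hPC.1 1 H.one_mem x hxmem ?_
    rw [caySum, SimpleGraph.fromRel_adj]
    exact ⟨fun h => hx1 h.symm, Or.inl (by simpa using hx)⟩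
  -- conjugate of g is in the core
  have hg' : x⁻¹ * g * x ∈ H.normalCore := by
    have := (Subgroup.normalCore_normal H).conj_mem g hg x⁻¹
    simpa using this
  have hg'H : x⁻¹ * g * x ∈ H := H.normalCore_le hg'
  -- the vertex v = g⁻¹ * x is not in H
  set v := g⁻¹ * x with hv
  have hvH : v ∉ (H : Set G) := by
    intro hmem
    have hxv : x = g * v := by rw [hv]; group
    exact hxH (by rw [hxv]; exact H.mul_mem hgH hmem)
  obtain ⟨u, _, huniq⟩ := hPC.2 v hvH
  have adj1 : (caySum G X).Adj v g := by
    rw [caySum, SimpleGraph.fromRel_adj]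
    constructor
    · intro h
      apply hxH
      have hx2 : x = g * g := by
        rw [hv] at h
        have := congrArg (fun y => g * y) h
        simpa [mul_assoc] using this
      rw [hx2]; exact H.mul_mem hgH hgH
    · left
      have : v * g = g⁻¹ * x * g := by rw [hv]
      rw [this]
      exact hX g x hx
  have adj2 : (caySum G X).Adj v (x⁻¹ * g * x) := by
    rw [caySum, SimpleGraph.fromRel_adj]
    constructor
    · intro h
      apply hxH
      have hx2 : g * g = x := by
        rw [hv] at h
        have := congrArg (fun y => g * x * y * x⁻¹ * g) h
        simpa [mul_assoc] using this.symm
      rw [← hx2]; exact H.mul_mem hgH hgH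
    · left
      have : v * (x⁻¹ * g * x) = g⁻¹ * g * x := by rw [hv]; group
      rw [this]
      simpa using hx
  have e1 : g = u := huniq g ⟨hgH, adj1⟩
  have e2 : x⁻¹ * g * x = u := huniq _ ⟨hg'H, adj2⟩
  have : x⁻¹ * g * x = g := e2.trans e1.symm
  have := congrArg (fun y => x * y) this
  simpa [mul_assoc] using this
end

section
/- Let G be a finite group, X a normal subset of G with |X| > 1, and H a normal subgroup of G that is a perfect code of CS(G,X). Then X is a union of at least two conjugacy classes of G; in particular X is not a single conjugacy class. -/
theorem perfectCode_not_single_conjClass {G : Type*} [Group G] [Finite G]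
    (H : Subgroup G) [H.Normal] (X : Set G) (hX : IsNormalSet X) (hcard : 1 < X.ncard)
    (hPC : IsPerfectCode (caySum G X) (H : Set G)) :
    (∃ x ∈ X, ∃ y ∈ X, ¬ IsConj x y) ∧ ¬ ∃ x : G, X = {y | IsConj x y} := by
  have key : ∃ x ∈ X, ∃ y ∈ X, ¬ IsConj x y := by
    by_contra hcon
    push_neg at hcon
    -- `hcon : ∀ x ∈ X, ∀ y ∈ X, IsConj x y`
    have hadj : ∀ g h : G, (caySum G X).Adj g h ↔ g ≠ h ∧ (g * h ∈ X ∨ h * g ∈ X) := by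
      intro g h; exact SimpleGraph.fromRel_adj _ g h
    have hswap : ∀ g h : G, h * g ∈ X → g * h ∈ X := by
      intro g h hm
      have := hX h (h * g) hm
      simpa [mul_assoc] using this
    have h1 : (1 : G) ∉ X := by
      intro h1m
      have hXsub : X = {1} := by
        apply Set.eq_singleton_iff_nonempty_unique_mem.2
        refine ⟨⟨1, h1m⟩, fun y hy => ?_⟩
        exact isConj_one_right.mp (hcon 1 h1m y hy)
      rw [hXsub, Set.ncard_singleton] at hcard
      omega
    have h2 : ∀ x ∈ X, x ∉ (H : Set G) := by
      intro x hx hxH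
      have hx1 : x ≠ (1 : G) := by rintro rfl; exact h1 hx
      exact hPC.1 1 H.one_mem x hxH ((hadj 1 x).2 ⟨hx1.symm, Or.inl (by simpa using hx)⟩)
    have h3 : ∀ x ∈ X, ∀ h : G, h ∈ H → x * h ∈ X → h = 1 := by
      intro x hx h hh hxh
      obtain ⟨u, _, huniq⟩ := hPC.2 x (h2 x hx)
      have e1 : (1 : G) = u := huniq 1 ⟨H.one_mem, (hadj x 1).2
        (by refine ⟨fun h => h1 (h ▸ hx), Or.inl (by simpa using hx)⟩)⟩
      have e2 : h = u := huniq h ⟨hh, (hadj x h).2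
        ⟨fun he => h2 x hx (he ▸ hh), Or.inl hxh⟩⟩
      rw [e2, ← e1]
    set Q := G ⧸ H
    set f : G →* Q := QuotientGroup.mk' H with hf
    have hinj : Set.InjOn f X := by
      intro x hx y hy hxy
      have hmem : x⁻¹ * y ∈ H := by
        have h0 : f (x⁻¹ * y) = 1 := by rw [map_mul, map_inv, hxy, inv_mul_cancel]
        exact (QuotientGroup.eq_one_iff _).1 h0
      have h0 := h3 x hx (x⁻¹ * y) hmem (by rw [mul_inv_cancel_left]; exact hy)
      exact inv_mul_eq_one.mp h0
    have hsurj : ∀ q : Q, q ≠ 1 → ∃ x ∈ X, f x = q := by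
      intro q hq
      obtain ⟨g, rfl⟩ := QuotientGroup.mk'_surjective H q
      have hg : g ∉ (H : Set G) := fun hgH => hq ((QuotientGroup.eq_one_iff g).2 hgH)
      obtain ⟨u, ⟨huH, hadju⟩, _⟩ := hPC.2 g hg
      have hfu : f u = 1 := (QuotientGroup.eq_one_iff u).2 huH
      rcases ((hadj g u).1 hadju).2 with hgu | hug
      · exact ⟨g * u, hgu, by rw [map_mul, hfu, mul_one]⟩
      · exact ⟨g * u, hswap g u hug, by rw [map_mul, hfu, mul_one]⟩
    have himg : f '' X = ({1} : Set Q)ᶜ := by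
      ext q
      simp only [Set.mem_compl_iff, Set.mem_singleton_iff, Set.mem_image]
      constructor
      · rintro ⟨x, hx, rfl⟩ hq1
        exact h2 x hx ((QuotientGroup.eq_one_iff x).1 hq1)
      · intro hq
        exact hsurj q hq
    obtain ⟨x₀, hx₀⟩ : X.Nonempty := Set.nonempty_of_ncard_ne_zero (by omega)
    set a : Q := f x₀ with ha
    have ha1 : a ≠ 1 := fun h => h2 x₀ hx₀ ((QuotientGroup.eq_one_iff x₀).1 h)
    have horb : MulAction.orbit (ConjAct Q) a = ({1} : Set Q)ᶜ := by
      ext q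
      rw [ConjAct.mem_orbit_conjAct]
      simp only [Set.mem_compl_iff, Set.mem_singleton_iff]
      constructor
      · rintro hc rfl
        exact ha1 (isConj_one_left.mp hc.symm)
      · intro hq
        obtain ⟨y, hy, rfl⟩ := hsurj q hq
        exact (f.map_isConj (hcon x₀ hx₀ y hy)).symm
    -- cardinalities
    have hc1 : X.ncard = (({1} : Set Q)ᶜ).ncard := by
      rw [← himg, Set.ncard_image_of_injOn hinj]
    have hc2 : (({1} : Set Q)ᶜ).ncard = Nat.card Q - 1 := by
      have := Set.ncard_add_ncard_compl ({1} : Set Q)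
      rw [Set.ncard_singleton] at this
      omega
    have hdvd : Nat.card (MulAction.orbit (ConjAct Q) a) ∣ Nat.card Q := by
      have h := Nat.card_congr (MulAction.orbitEquivQuotientStabilizer (ConjAct Q) a)
      rw [h]
      exact (MulAction.stabilizer (ConjAct Q) a).index_dvd_card
    rw [horb, Nat.card_coe_set_eq, hc2] at hdvd
    have hn : 1 ≤ Nat.card Q := Nat.card_pos
    have hd1 : Nat.card Q - 1 ∣ Nat.card Q - (Nat.card Q - 1) := Nat.dvd_sub hdvd dvd_rfl
    have he : Nat.card Q - (Nat.card Q - 1) = 1 := by omega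
    rw [he] at hd1
    have := Nat.le_of_dvd one_pos hd1
    omega
  refine ⟨key, ?_⟩
  rintro ⟨z, hz⟩
  obtain ⟨x, hx, y, hy, hxy⟩ := key
  rw [hz] at hx hy
  exact hxy (hx.symm.trans hy)
end

section
/- Let G be a finite group and H a subgroup of G whose core in G is not contained in the center Z(G). Then for every normal subset X of G with CS(G,X) connected, H is not a perfect code of CS(G,X). -/
theorem not_perfectCode_of_core_not_central {G : Type*} [Group G] [Finite G]
    (H : Subgroup G) (hcore : ¬ H.normalCore ≤ Subgroup.center G) :
    ∀ X : Set G, IsNormalSet X → (caySum G X).Connected →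
      ¬ IsPerfectCode (caySum G X) (H : Set G) := by
  intro X hX hconn hpc
  obtain ⟨hind, huniq⟩ := hpc
  apply hcore
  -- every element of X commutes with every element of the normal core
  have key : ∀ x ∈ X, ∀ n ∈ H.normalCore, x * n = n * x := by
    intro x hx n hn
    by_cases hxH : x ∈ H
    · -- x must be 1
      have hx1 : x = 1 := by
        by_contra h1
        exact hind 1 H.one_mem x hxH ⟨Ne.symm h1, Or.inl (by simpa using hx)⟩
      subst hx1; simp
    · have hnH : n ∈ H := H.normalCore_le hn
      have hnxH : n * x ∉ H := fun h => hxH (by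
        have : n⁻¹ * (n * x) ∈ H := H.mul_mem (H.inv_mem hnH) h
        simpa using this)
      obtain ⟨u, _, huniq'⟩ := huniq (n * x) hnxH
      have hNnormal : (H.normalCore).Normal := Subgroup.normalCore_normal H
      -- candidate 1 : x⁻¹ * n⁻¹ * x
      have hc1mem : x⁻¹ * n⁻¹ * x ∈ H := by
        have : (x⁻¹) * n⁻¹ * (x⁻¹)⁻¹ ∈ H.normalCore :=
          hNnormal.conj_mem _ (H.normalCore.inv_mem hn) _
        exact H.normalCore_le (by simpa using this)
      have hc1adj : (caySum G X).Adj (n * x) (x⁻¹ * n⁻¹ * x) := by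
        refine (SimpleGraph.fromRel_adj _ _ _).mpr ⟨fun h => hnxH (h ▸ hc1mem), Or.inl ?_⟩
        have : n * x * (x⁻¹ * n⁻¹ * x) = x := by group
        rw [this]; exact hx
      -- candidate 2 : n⁻¹
      have hc2mem : n⁻¹ ∈ H := H.inv_mem hnH
      have hc2adj : (caySum G X).Adj (n * x) n⁻¹ := by
        refine (SimpleGraph.fromRel_adj _ _ _).mpr ⟨fun h => hnxH (h ▸ hc2mem), Or.inl ?_⟩
        have : n * x * n⁻¹ = (n⁻¹)⁻¹ * x * n⁻¹ := by group
        rw [this]; exact hX n⁻¹ x hx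
      have e1 : x⁻¹ * n⁻¹ * x = u := huniq' _ ⟨hc1mem, hc1adj⟩
      have e2 : (n⁻¹ : G) = u := huniq' _ ⟨hc2mem, hc2adj⟩
      have : x⁻¹ * n⁻¹ * x = n⁻¹ := e1.trans e2.symm
      have : n⁻¹ * x = x * n⁻¹ := by
        calc n⁻¹ * x = x * (x⁻¹ * n⁻¹ * x) := by group
        _ = x * n⁻¹ := by rw [this]
      calc x * n = n * (n⁻¹ * x) * n := by group
      _ = n * (x * n⁻¹) * n := by rw [this]
      _ = n * x := by group
  -- connectivity gives that X generates G
  have step : ∀ a b : G, (caySum G X).Walk a b →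
      a ∈ Subgroup.closure X → b ∈ Subgroup.closure X := by
    intro a b w
    induction w with
    | nil => exact id
    | @cons a c b h p ih =>
      intro ha
      apply ih
      rcases (SimpleGraph.fromRel_adj _ _ _).mp h with ⟨_, hx | hx⟩
      · have := Subgroup.mul_mem _ (Subgroup.inv_mem _ ha) (Subgroup.subset_closure hx)
        simpa using this
      · have := Subgroup.mul_mem _ (Subgroup.subset_closure hx) (Subgroup.inv_mem _ ha)
        simpa using this
  have hgen : ∀ g : G, g ∈ Subgroup.closure X := by
    intro g
    obtain ⟨w⟩ := hconn 1 g
    exact step 1 g w (Subgroup.one_mem _)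
  -- conclude
  intro n hn
  rw [Subgroup.mem_center_iff]
  intro g
  refine Subgroup.closure_induction (fun x hx => key x hx n hn) (by simp) ?_ ?_ (hgen g)
  · intro a b _ _ ha hb
    calc a * b * n = a * (b * n) := by group
    _ = a * (n * b) := by rw [hb]
    _ = (a * n) * b := by group
    _ = n * (a * b) := by rw [ha]; group
  · intro a _ ha
    calc a⁻¹ * n = a⁻¹ * n * (a * a⁻¹) := by group
    _ = a⁻¹ * (n * a) * a⁻¹ := by group
    _ = a⁻¹ * (a * n) * a⁻¹ := by rw [ha]
    _ = n * a⁻¹ := by group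
end

section
/- Let G be a finite group, Y a normal subset of G, and H a subgroup that is a total perfect code of CS(G,Y). If z is the unique common element of H and Y, then H is contained in the centralizer C_G(z). -/
theorem totalPerfectCode_subgroup_le_centralizer {G : Type*} [Group G] [Finite G]
    (H : Subgroup G) (Y : Set G) (hY : IsNormalSet Y)
    (hTPC : IsTotalPerfectCode (caySum G Y) (H : Set G)) (z : G)
    (hz : (H : Set G) ∩ Y = {z}) :
    ∀ h ∈ H, h * z = z * h := by
  intro h hh
  have hzmem : z ∈ (H : Set G) ∩ Y := by rw [hz]; exact rfl
  obtain ⟨hzH, hzY⟩ := hzmem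
  by_cases hcase : z = h * h
  · rw [hcase]; exact (mul_assoc h h h).symm
  · obtain ⟨u, _, huniq⟩ := hTPC h
    have h1 : h⁻¹ * z ∈ (H : Set G) ∧ (caySum G Y).Adj h (h⁻¹ * z) := by
      refine ⟨H.mul_mem (H.inv_mem hh) hzH, ?_⟩
      rw [caySum, SimpleGraph.fromRel_adj]
      refine ⟨fun he => hcase ?_, Or.inl ?_⟩
      · have : h * h = h * (h⁻¹ * z) := by rw [← he]
        rw [this]; group
      · show h * (h⁻¹ * z) ∈ Y
        rw [← mul_assoc, mul_inv_cancel, one_mul]; exact hzY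
    have h2 : z * h⁻¹ ∈ (H : Set G) ∧ (caySum G Y).Adj h (z * h⁻¹) := by
      refine ⟨H.mul_mem hzH (H.inv_mem hh), ?_⟩
      rw [caySum, SimpleGraph.fromRel_adj]
      refine ⟨fun he => hcase ?_, Or.inr ?_⟩
      · have h4 : h * h = z * h⁻¹ * h := by rw [← he]
        rw [mul_assoc, inv_mul_cancel, mul_one] at h4
        exact h4.symm
      · show z * h⁻¹ * h ∈ Y
        rw [mul_assoc, inv_mul_cancel, mul_one]; exact hzY
    have := (huniq _ h1).trans (huniq _ h2).symm
    have h3 : h * (h⁻¹ * z) * h = h * (z * h⁻¹) * h := by rw [this]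
    calc h * z = h * (z * h⁻¹) * h := by group
    _ = h * (h⁻¹ * z) * h := h3.symm
    _ = z * h := by group
end

section
/- Let G be a finite group and H a subgroup whose core in G is not contained in the center of G. Then for every normal subset Y of G with CS(G,Y) connected, H is not a total perfect code of CS(G,Y). -/
theorem IsTotalPerfectCode.eq_of_adj {V : Type*} {Γ : SimpleGraph V} {C : Set V}
    (hC : IsTotalPerfectCode Γ C) {v u u' : V} (hu : u ∈ C) (hvu : Γ.Adj v u) (hu' : u' ∈ C)
    (hvu' : Γ.Adj v u') : u = u' :=
  (hC v).unique ⟨hu, hvu⟩ ⟨hu', hvu'⟩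

section caySum

variable {G : Type*} [Group G] {Y : Set G}

theorem caySum_adj_of_mul_mem {a b : G} (hab : a ≠ b) (h : a * b ∈ Y) : (caySum G Y).Adj a b :=
  (SimpleGraph.fromRel_adj _ a b).2 ⟨hab, Or.inl h⟩

theorem closure_eq_top_of_caySum_preconnected (hY : (caySum G Y).Preconnected) :
    Subgroup.closure Y = ⊤ := by
  have walk_mem : ∀ {a b : G}, (caySum G Y).Walk a b →
      a ∈ Subgroup.closure Y → b ∈ Subgroup.closure Y := by
    intro a b w
    induction w with
    | nil => exact id
    | @cons a c b hac _ ih =>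
      intro ha
      rcases ((SimpleGraph.fromRel_adj _ _ _).1 hac).2 with hm | hm
      · exact ih (by simpa using mul_mem (inv_mem ha) (Subgroup.subset_closure hm))
      · exact ih (by simpa using mul_mem (Subgroup.subset_closure hm) (inv_mem ha))
  refine eq_top_iff.2 fun g _ => ?_
  obtain ⟨w⟩ := hY 1 g
  exact walk_mem w (one_mem _)

variable {H : Subgroup G} (hY : IsNormalSet Y) (hH : IsTotalPerfectCode (caySum G Y) (H : Set G))
include hY hH

theorem commute_of_mem_of_notMem {N : Subgroup G} [N.Normal] (hNH : N ≤ H) {y n : G}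
    (hy : y ∈ Y) (hyH : y ∉ H) (hn : n ∈ N) : Commute y n := by
  have hc : y⁻¹ * n⁻¹ * y * n ∈ H :=
    hNH (mul_mem (Subgroup.Normal.conj_mem' ‹_› n⁻¹ (inv_mem hn) y) hn)
  have hne : ∀ {h : G}, h ∈ H → y ≠ h := fun h hyh => hyH (hyh ▸ h)
  -- `y * [y⁻¹, n⁻¹] = n⁻¹ * y * n` is again in `Y`
  have hyc : y * (y⁻¹ * n⁻¹ * y * n) ∈ Y := by simpa [mul_assoc] using hY n y hy
  have h1 : (1 : G) = y⁻¹ * n⁻¹ * y * n :=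
    hH.eq_of_adj (one_mem H) (caySum_adj_of_mul_mem (hne (one_mem H)) (by simpa using hy))
      hc (caySum_adj_of_mul_mem (hne hc) hyc)
  calc y * n = n * y * (y⁻¹ * n⁻¹ * y * n) := by group
    _ = n * y := by rw [← h1, mul_one]

theorem commute_of_mem_of_mem {y h : G} (hy : y ∈ Y) (hyH : y ∈ H) (hh : h ∈ H) :
    Commute y h := by
  rcases eq_or_ne y 1 with rfl | hy1
  · exact Commute.one_left h
  have hconj : h⁻¹ * y * h ∈ H := mul_mem (mul_mem (inv_mem hh) hyH) hh
  have hconj1 : (1 : G) ≠ h⁻¹ * y * h := by simpa [eq_comm, mul_assoc, inv_mul_eq_one] using hy1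
  have h1 : y = h⁻¹ * y * h :=
    hH.eq_of_adj hyH (caySum_adj_of_mul_mem hy1.symm (by simpa using hy))
      hconj (caySum_adj_of_mul_mem hconj1 (by simpa using hY h y hy))
  calc y * h = h * (h⁻¹ * y * h) := by group
    _ = h * y := by rw [← h1]

end caySum

theorem not_totalPerfectCode_of_core_not_central_general {G : Type*} [Group G]
    (H : Subgroup G) (hcore : ¬ H.normalCore ≤ Subgroup.center G) :
    ∀ Y : Set G, IsNormalSet Y → (caySum G Y).Connected →
      ¬ IsTotalPerfectCode (caySum G Y) (H : Set G) := by
  intro Y hY hconn hH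
  refine hcore (Subgroup.centralizer_eq_top_iff_subset.1 (eq_top_iff.2 ?_))
  rw [← closure_eq_top_of_caySum_preconnected hconn.preconnected, Subgroup.closure_le]
  intro y hy n hn
  by_cases hyH : y ∈ H
  · exact (commute_of_mem_of_mem hY hH hy hyH (H.normalCore_le hn)).symm.eq
  · exact (commute_of_mem_of_notMem hY hH H.normalCore_le hy hyH hn).symm.eq

theorem not_totalPerfectCode_of_core_not_central {G : Type*} [Group G] [Finite G]
    (H : Subgroup G) (hcore : ¬ H.normalCore ≤ Subgroup.center G) :
    ∀ Y : Set G, IsNormalSet Y → (caySum G Y).Connected →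
      ¬ IsTotalPerfectCode (caySum G Y) (H : Set G) :=
  not_totalPerfectCode_of_core_not_central_general H hcore
end

section
/- Every subgroup H of a finite abelian group G is a perfect code of some Cayley sum graph of G. -/
def caySumAdd (G : Type*) [AddGroup G] (X : Set G) : SimpleGraph G :=
  SimpleGraph.fromRel (fun g h => g + h ∈ X)

/-- The Frattini subgroup of an additive subgroup `Q`: the intersection of `Q` with all
maximal proper subgroups of `Q`. -/
def addFrattini {G : Type*} [AddGroup G] (Q : AddSubgroup G) : AddSubgroup G :=
  Q ⊓ sInf {M : AddSubgroup G | M < Q ∧ ∀ N : AddSubgroup G, M < N → N ≤ Q → N = Q}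

/-! `H` is a perfect code of `CS(G, X)` as soon as `X` misses `H` and picks exactly one element
from every other coset of `H`, e.g. a choice of representatives of the nonzero cosets: the unique
neighbour in `H` of `v ∉ H` is then `x - v`, where `x` is the chosen element of `v + H`. -/

open QuotientAddGroup

theorem caySumAdd_adj_iff {G : Type*} [AddCommGroup G] (X : Set G) (g h : G) :
    (caySumAdd G X).Adj g h ↔ g ≠ h ∧ g + h ∈ X := by
  rw [caySumAdd, SimpleGraph.fromRel_adj, add_comm h g, or_self]

theorem isPerfectCode_caySumAdd_of_existsUnique_mem_coset {G : Type*} [AddCommGroup G]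
    (H : AddSubgroup G) (X : Set G) (hXH : ∀ x ∈ X, x ∉ H)
    (hX : ∀ g ∉ H, ∃! x, x ∈ X ∧ (x : G ⧸ H) = g) :
    IsPerfectCode (caySumAdd G X) (H : Set G) := by
  refine ⟨fun u hu v hv huv => ?_, fun v hv => ?_⟩
  · exact hXH _ ((caySumAdd_adj_iff X u v).1 huv).2 (H.add_mem hu hv)
  obtain ⟨x, ⟨hxX, hxv⟩, hx_unique⟩ := hX v hv
  have hxv_mem : x - v ∈ H := eq_iff_sub_mem.1 hxv
  have hv_ne : v ≠ x - v := fun h => hv (h.symm ▸ hxv_mem)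
  refine ⟨x - v, ⟨hxv_mem, (caySumAdd_adj_iff X v _).2 ⟨hv_ne, by rwa [add_sub_cancel]⟩⟩,
    ?_⟩
  rintro u ⟨hu, hvu⟩
  have hvu_coset : ((v + u : G) : G ⧸ H) = v :=
    eq_iff_sub_mem.2 (by rwa [add_sub_cancel_left])
  rw [← hx_unique (v + u) ⟨((caySumAdd_adj_iff X v u).1 hvu).2, hvu_coset⟩,
    add_sub_cancel_left]

section NonzeroCosetReps

variable {G : Type*} [AddGroup G] (H : AddSubgroup G) [H.Normal]

def nonzeroCosetReps : Set G :=
  Quotient.out '' {q : G ⧸ H | q ≠ 0}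

theorem notMem_of_mem_nonzeroCosetReps {x : G} (hx : x ∈ nonzeroCosetReps H) :
    x ∉ H := by
  obtain ⟨q, hq, rfl⟩ := hx
  rw [← eq_zero_iff, out_eq']
  exact hq

theorem existsUnique_mem_nonzeroCosetReps_coset {g : G} (hg : g ∉ H) :
    ∃! x, x ∈ nonzeroCosetReps H ∧ (x : G ⧸ H) = g := by
  refine ⟨Quotient.out (g : G ⧸ H), ⟨⟨_, mt (eq_zero_iff g).1 hg, rfl⟩, out_eq' _⟩, ?_⟩
  rintro _ ⟨⟨q, -, rfl⟩, hq⟩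
  rw [← hq, out_eq']

end NonzeroCosetReps

theorem abelian_subgroup_perfectCode_general {G : Type*} [AddCommGroup G]
    (H : AddSubgroup G) :
    ∃ X : Set G, IsPerfectCode (caySumAdd G X) (H : Set G) :=
  ⟨nonzeroCosetReps H, isPerfectCode_caySumAdd_of_existsUnique_mem_coset H _
    (fun _ => notMem_of_mem_nonzeroCosetReps H)
    (fun _ => existsUnique_mem_nonzeroCosetReps_coset H)⟩

theorem abelian_subgroup_perfectCode {G : Type*} [AddCommGroup G] [Finite G]
    (H : AddSubgroup G) :
    ∃ X : Set G, IsPerfectCode (caySumAdd G X) (H : Set G) :=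
  abelian_subgroup_perfectCode_general H
end

section
/- Every subgroup of even order of a finite abelian group G is a total perfect code of some Cayley sum graph of G. -/
theorem abelian_even_subgroup_totalPerfectCode {G : Type*} [AddCommGroup G] [Finite G]
    (H : AddSubgroup G) (hH : Even (Nat.card H)) :
    ∃ X : Set G, IsTotalPerfectCode (caySumAdd G X) (H : Set G) := by
  classical
  -- doubling homomorphism
  let φ : G →+ G :=
    { toFun := fun g => g + g
      map_zero' := by simp
      map_add' := by intro a b; abel }
  set K : AddSubgroup G := H.map φ with hK
  have hKH : K ≤ H := by
    rintro _ ⟨h, hh, rfl⟩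
    exact H.add_mem hh hh
  -- there is an element of H not in K
  have hKne : ∃ z ∈ H, z ∉ K := by
    by_contra hc
    push_neg at hc
    -- doubling on H is surjective, hence injective
    have hsurj : Function.Surjective (fun x : H => (⟨(x : G) + x, H.add_mem x.2 x.2⟩ : H)) := by
      intro y
      obtain ⟨h, hh, hhy⟩ := hc y y.2
      exact ⟨⟨h, hh⟩, Subtype.ext hhy⟩
    have hinj := Finite.injective_iff_surjective.2 hsurj
    obtain ⟨a, ha⟩ := exists_prime_addOrderOf_dvd_card' (G := H) 2 (hH.two_dvd)
    have ha0 : a ≠ 0 := by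
      intro h; rw [h] at ha; simp at ha
    have haa : a + a = 0 := by
      have h2 : addOrderOf a • a = 0 := addOrderOf_nsmul_eq_zero a
      rw [ha, two_nsmul] at h2
      exact h2
    have key : (fun x : H => (⟨(x : G) + x, H.add_mem x.2 x.2⟩ : H)) a
        = (fun x : H => (⟨(x : G) + x, H.add_mem x.2 x.2⟩ : H)) 0 := by
      apply Subtype.ext
      show (a : G) + a = ((0 : H) : G) + ((0 : H) : G)
      rw [← AddSubgroup.coe_add, haa]
      simp
    exact ha0 (hinj key)
  obtain ⟨z, hzH, hzK⟩ := hKne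
  -- key existence lemma
  have exists_rep : ∀ c : G, ∃ x : G, x - c ∈ H ∧ x - (c + c) ∉ K := by
    intro c
    by_cases hcase : ∃ h₀ ∈ H, h₀ - c ∈ K
    · obtain ⟨h₀, hh₀, hh₀K⟩ := hcase
      refine ⟨c + h₀ + z, ?_, ?_⟩
      · have he : c + h₀ + z - c = h₀ + z := by abel
        rw [he]; exact H.add_mem hh₀ hzH
      · intro hx
        have hmem : (c + h₀ + z) - (c + c) - (h₀ - c) ∈ K := K.sub_mem hx hh₀K
        have he : (c + h₀ + z) - (c + c) - (h₀ - c) = z := by abel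
        rw [he] at hmem
        exact hzK hmem
    · refine ⟨c, by simpa using H.zero_mem, ?_⟩
      intro hx
      have he : c - (c + c) = -c := by abel
      rw [he] at hx
      exact hcase ⟨0, H.zero_mem, by simpa using K.neg_mem hx⟩
  -- one representative per coset
  let r : G ⧸ H → G := fun q => Classical.choose (exists_rep q.out)
  have hr1 : ∀ q : G ⧸ H, r q - q.out ∈ H := fun q => (Classical.choose_spec (exists_rep q.out)).1
  have hr2 : ∀ q : G ⧸ H, r q - (q.out + q.out) ∉ K :=
    fun q => (Classical.choose_spec (exists_rep q.out)).2
  have hrcoset : ∀ q : G ⧸ H, ((r q : G) : G ⧸ H) = q := by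
    intro q
    rw [← QuotientAddGroup.out_eq' q]
    exact QuotientAddGroup.eq.mpr (by simpa [neg_add_eq_sub] using H.neg_mem (hr1 q))
  refine ⟨Set.range r, ?_⟩
  intro v
  set q : G ⧸ H := (v : G ⧸ H) with hq
  have hvq : v - q.out ∈ H := by
    have h1 : ((v : G) : G ⧸ H) = ((q.out : G) : G ⧸ H) := by
      rw [QuotientAddGroup.out_eq' q, hq]
    have := QuotientAddGroup.eq.mp h1
    have he : -v + q.out = -(v - q.out) := by abel
    rw [he] at this
    simpa using H.neg_mem this
  set x : G := r q with hx
  have hxv : x - v ∈ H := by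
    have he : x - v = (x - q.out) - (v - q.out) := by abel
    rw [he]
    exact H.sub_mem (hr1 q) hvq
  have hxne : x ≠ v + v := by
    intro he
    apply hr2 q
    have he2 : x - (q.out + q.out) = φ (v - q.out) := by
      simp only [φ, AddMonoidHom.coe_mk, ZeroHom.coe_mk]
      rw [he]; abel
    rw [he2]
    exact ⟨v - q.out, hvq, rfl⟩
  refine ⟨x - v, ⟨hxv, ?_⟩, ?_⟩
  · -- adjacency v ~ (x - v)
    rw [caySumAdd, SimpleGraph.fromRel_adj]
    constructor
    · intro he
      apply hxne
      rw [eq_comm, sub_eq_iff_eq_add] at he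
      rw [he]
    · left
      refine ⟨q, ?_⟩
      show r q = v + (x - v)
      have he : v + (x - v) = x := by abel
      rw [he, hx]
  · rintro u ⟨huH, hadj⟩
    rw [caySumAdd, SimpleGraph.fromRel_adj] at hadj
    obtain ⟨hne, hmem⟩ := hadj
    have hmem' : v + u ∈ Set.range r := by
      rcases hmem with h | h
      · exact h
      · rwa [add_comm] at h
    obtain ⟨q', hq'⟩ := hmem'
    have hqq : q' = q := by
      rw [← hrcoset q', hq', hq]
      refine QuotientAddGroup.eq.mpr ?_
      have he : -(v + u) + v = -u := by abel
      rw [he]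
      exact H.neg_mem huH
    rw [hqq] at hq'
    rw [hx, hq']
    abel
end

section
/- Let D_{2n} = ⟨a, b | aⁿ = b² = 1, b⁻¹ab = a⁻¹⟩ be the dihedral group of order 2n, and let X = {b, ab, a²b, ..., aⁿ⁻¹b}. Then X is a normal subset of D_{2n}, the Cayley sum graph CS(D_{2n}, X) is isomorphic to the complete bipartite graph K_{n,n}, and the subgroup ⟨b⟩ is a total perfect code of CS(D_{2n}, X). -/
/-!
The reflections of `D_{2n}` form the complement of the rotation subgroup, which has index 2.
For any subgroup `H` of index 2, `gh ∉ H` holds exactly when one of `g`, `h` lies in `H` and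
the other does not, so `CS(G, G \ H)` is the complete bipartite graph with parts `H` and `G \ H`.
In it, every vertex of `H` has exactly one neighbour in `{1, s}` (namely `s`) when `s ∉ H`,
and every vertex outside `H` exactly one (namely `1`).
-/

section CayleySum

variable {G : Type*} [Group G]

theorem isNormalSet_compl (H : Subgroup G) [H.Normal] : IsNormalSet (H : Set G)ᶜ := by
  intro g x hx hconj
  apply hx
  simpa [mul_assoc] using Subgroup.Normal.conj_mem ‹_› _ hconj g

theorem coe_closure_singleton_of_mul_self {s : G} (hs : s * s = 1) :
    (Subgroup.closure {s} : Set G) = {1, s} := by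
  ext g
  simp only [SetLike.mem_coe, Subgroup.mem_closure_singleton, Set.mem_insert_iff,
    Set.mem_singleton_iff]
  constructor
  · rintro ⟨k, rfl⟩
    rw [zpow_eq_zpow_emod' k (n := 2) (by rw [sq, hs])]
    rcases Int.emod_two_eq_zero_or_one k with h | h <;> simp [h]
  · rintro (rfl | rfl)
    exacts [⟨0, zpow_zero _⟩, ⟨1, zpow_one _⟩]

variable {H : Subgroup G}

theorem caySum_compl_adj_iff (hH : H.index = 2) {g h : G} :
    (caySum G (H : Set G)ᶜ).Adj g h ↔ (g ∈ H ↔ h ∉ H) := by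
  have hmem : ∀ a b : G, a * b ∉ H ↔ (a ∈ H ↔ b ∉ H) := fun a b => by
    rw [Subgroup.mul_mem_iff_of_index_two hH]; tauto
  simp only [caySum, SimpleGraph.fromRel_adj, Set.mem_compl_iff, SetLike.mem_coe, hmem]
  constructor
  · rintro ⟨-, hgh | hhg⟩ <;> tauto
  · intro hgh
    exact ⟨by rintro rfl; tauto, Or.inl hgh⟩

theorem isTotalPerfectCode_caySum_compl (hH : H.index = 2) {s : G} (hs : s ∉ H) :
    IsTotalPerfectCode (caySum G (H : Set G)ᶜ) {1, s} := by
  intro v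
  by_cases hv : v ∈ H
  · refine ⟨s, ⟨Or.inr rfl, (caySum_compl_adj_iff hH).2 (by tauto)⟩, ?_⟩
    rintro u ⟨rfl | rfl, hvu⟩
    · exact absurd H.one_mem ((caySum_compl_adj_iff hH).1 hvu |>.1 hv)
    · rfl
  · refine ⟨1, ⟨Or.inl rfl, (caySum_compl_adj_iff hH).2 (by simp [hv])⟩, ?_⟩
    rintro u ⟨rfl | rfl, hvu⟩
    · rfl
    · exact absurd ((caySum_compl_adj_iff hH).1 hvu) (by tauto)

def caySumComplIso (hH : H.index = 2) {α β : Type*} (e : G ≃ α ⊕ β)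
    (he : ∀ g, g ∈ H ↔ (e g).isLeft) :
    caySum G (H : Set G)ᶜ ≃g completeBipartiteGraph α β where
  toEquiv := e
  map_rel_iff' {g h} := by
    rw [caySum_compl_adj_iff hH, he, he]
    cases e g <;> cases e h <;> simp

end CayleySum

namespace DihedralGroup

variable {n : ℕ}

def rotations (n : ℕ) : Subgroup (DihedralGroup n) where
  carrier := {g | ∃ i, g = r i}
  mul_mem' := by
    rintro _ _ ⟨i, rfl⟩ ⟨j, rfl⟩
    exact ⟨i + j, r_mul_r i j⟩
  one_mem' := ⟨0, rfl⟩
  inv_mem' := by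
    rintro _ ⟨i, rfl⟩
    exact ⟨-i, inv_r i⟩

theorem mem_rotations_iff_isLeft (g : DihedralGroup n) :
    g ∈ rotations n ↔ (equivSum g).isLeft := by
  cases g <;> simp [rotations]

theorem sr_notMem_rotations (i : ZMod n) : sr i ∉ rotations n := by
  simp [mem_rotations_iff_isLeft]

theorem index_rotations : (rotations n).index = 2 := by
  refine Subgroup.index_eq_two_iff.2 ⟨sr 0, fun g => ?_⟩
  cases g <;> simp [mem_rotations_iff_isLeft, r_mul_sr, sr_mul_sr]

instance : (rotations n).Normal :=
  Subgroup.normal_of_index_eq_two index_rotations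

theorem coe_rotations_compl :
    (rotations n : Set (DihedralGroup n))ᶜ = {x | ∃ i, x = sr i} := by
  ext g
  cases g <;> simp [mem_rotations_iff_isLeft]

end DihedralGroup

theorem dihedral_completeBipartite_general {n : ℕ}
    (X : Set (DihedralGroup n)) (hX : X = {x | ∃ i, x = DihedralGroup.sr i}) :
    IsNormalSet X ∧
      Nonempty ((caySum (DihedralGroup n) X) ≃g
        (completeBipartiteGraph (ZMod n) (ZMod n))) ∧
      IsTotalPerfectCode (caySum (DihedralGroup n) X)
        ((Subgroup.closure {DihedralGroup.sr 0} : Subgroup (DihedralGroup n)) : Set _) := by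
  rw [hX, ← DihedralGroup.coe_rotations_compl,
    coe_closure_singleton_of_mul_self (DihedralGroup.sr_mul_self 0)]
  exact ⟨isNormalSet_compl _,
    ⟨caySumComplIso DihedralGroup.index_rotations DihedralGroup.equivSum
      DihedralGroup.mem_rotations_iff_isLeft⟩,
    isTotalPerfectCode_caySum_compl DihedralGroup.index_rotations
      (DihedralGroup.sr_notMem_rotations 0)⟩

theorem dihedral_completeBipartite {n : ℕ} (hn : 0 < n)
    (X : Set (DihedralGroup n)) (hX : X = {x | ∃ i, x = DihedralGroup.sr i}) :
    IsNormalSet X ∧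
      Nonempty ((caySum (DihedralGroup n) X) ≃g
        (completeBipartiteGraph (ZMod n) (ZMod n))) ∧
      IsTotalPerfectCode (caySum (DihedralGroup n) X)
        ((Subgroup.closure {DihedralGroup.sr 0} : Subgroup (DihedralGroup n)) : Set _) :=
  dihedral_completeBipartite_general X hX
end

section
/- Let D_{2n} be the dihedral group of order 2n with n = 4k + 2 for a positive integer k, generated by a of order n and involution b with b⁻¹ab = a⁻¹. Let Z be an inverse-closed left transversal of ⟨a^{2k+1}⟩ in ⟨a⟩, and set X = b^{D_{2n}} ∪ (Z \ ⟨a^{2k+1}⟩), where b^{D_{2n}} is the conjugacy class of b. Then X is a normal subset of D_{2n} and ⟨a^{2k+1}⟩ is a perfect code of CS(D_{2n}, X). -/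
/-!
Because `X` is closed under conjugation, `g * h ∈ X ↔ h * g ∈ X`, so adjacency in `caySum G X`
is just `g ≠ h ∧ g * h ∈ X`; hence a subgroup `A` disjoint from `X` is a perfect code as soon
as every `v ∉ A` has exactly one `u ∈ A` with `v * u ∈ X`. Here `A = {1, a^(2k+1)}` consists of
rotations. For a rotation `v ∉ A` the unique `u` is `v⁻¹ * z`, where `z` represents the coset
`v * A` in `Z`. For a reflection `v = b a^i` the two candidates give `b a^i` and `b a^(i+2k+1)`;
the conjugacy class of `b` is the set of reflections of even index, and `2k+1` is odd, so exactly
one of them lies in `X`.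
-/

section CayleySum

variable {G : Type*} [Group G] {X : Set G}

theorem IsNormalSet.union {Y : Set G} (hX : IsNormalSet X) (hY : IsNormalSet Y) :
    IsNormalSet (X ∪ Y) := by
  rintro g x (hx | hx)
  exacts [Or.inl (hX g x hx), Or.inr (hY g x hx)]

theorem isNormalSet_setOf_isConj (a : G) : IsNormalSet {x | IsConj a x} :=
  fun g _ hx => hx.trans (isConj_iff.mpr ⟨g⁻¹, by group⟩)

theorem IsNormalSet.mul_mem_comm (hX : IsNormalSet X) {g h : G} (hgh : g * h ∈ X) :
    h * g ∈ X := by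
  simpa [mul_assoc] using hX g (g * h) hgh

theorem caySum_adj_iff (hX : IsNormalSet X) {g h : G} :
    (caySum G X).Adj g h ↔ g ≠ h ∧ g * h ∈ X := by
  rw [caySum, SimpleGraph.fromRel_adj, or_iff_left_of_imp hX.mul_mem_comm]

theorem isPerfectCode_caySum_subgroup (hX : IsNormalSet X) (H : Subgroup G)
    (hXH : ∀ x ∈ H, x ∉ X) (hdom : ∀ v ∉ H, ∃! u, u ∈ H ∧ v * u ∈ X) :
    IsPerfectCode (caySum G X) H := by
  refine ⟨fun u hu v hv hadj => hXH _ (H.mul_mem hu hv) ((caySum_adj_iff hX).mp hadj).2,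
    fun v hv => ?_⟩
  refine existsUnique_congr (fun u => ?_) |>.mpr (hdom v hv)
  rw [caySum_adj_iff hX]
  exact and_congr_right fun hu => and_iff_right (by rintro rfl; exact hv hu)

end CayleySum

theorem ZMod.castHom_eq_zero_iff_exists_eq_two_mul {n : ℕ} (hn : 2 ∣ n) (j : ZMod n) :
    ZMod.castHom hn (ZMod 2) j = 0 ↔ ∃ i, j = 2 * i := by
  constructor
  · intro hj
    rw [← ZMod.intCast_zmod_cast j, map_intCast, ZMod.intCast_zmod_eq_zero_iff_dvd] at hj
    obtain ⟨t, ht⟩ := hj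
    exact ⟨t, by rw [← ZMod.intCast_zmod_cast j, ht]; push_cast; rfl⟩
  · rintro ⟨i, rfl⟩
    rw [map_mul, map_ofNat, show (2 : ZMod 2) = 0 from rfl, zero_mul]

namespace DihedralGroup

variable {n : ℕ}

theorem conj_r_eq_r_or_eq_r_neg (g : DihedralGroup n) (i : ZMod n) :
    g⁻¹ * r i * g = r i ∨ g⁻¹ * r i * g = r (-i) := by
  rcases g with j | j
  · left; simp only [inv_r, r_mul_r]; congr 1; ring
  · right; simp only [inv_sr, sr_mul_r, sr_mul_sr]; congr 1; ring

theorem isNormalSet_of_forall_eq_r {S : Set (DihedralGroup n)} (hrot : ∀ z ∈ S, ∃ i, z = r i)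
    (hinv : ∀ z ∈ S, z⁻¹ ∈ S) : IsNormalSet S := by
  intro g x hx
  obtain ⟨i, rfl⟩ := hrot x hx
  rcases conj_r_eq_r_or_eq_r_neg g i with h | h
  · rwa [h]
  · rw [h, ← inv_r]; exact hinv _ hx

theorem isConj_sr_zero_iff (x : DihedralGroup n) : IsConj (sr 0) x ↔ ∃ i, x = sr (2 * i) := by
  rw [isConj_iff]
  constructor
  · rintro ⟨j | j, rfl⟩
    · exact ⟨-j, by simp only [inv_r, r_mul_sr, sr_mul_r]; congr 1; ring⟩
    · exact ⟨j, by simp only [inv_sr, sr_mul_sr, r_mul_sr]; congr 1; ring⟩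
  · rintro ⟨j, rfl⟩
    exact ⟨r (-j), by simp only [inv_r, r_mul_sr, sr_mul_r]; congr 1; ring⟩

theorem not_isConj_sr_zero_r (i : ZMod n) : ¬ IsConj (sr 0) (r i) := by
  rw [isConj_sr_zero_iff]
  rintro ⟨j, ⟨⟩⟩

theorem isConj_sr_zero_sr_iff (hn : 2 ∣ n) (j : ZMod n) :
    IsConj (sr 0) (sr j) ↔ ZMod.castHom hn (ZMod 2) j = 0 := by
  rw [isConj_sr_zero_iff, ZMod.castHom_eq_zero_iff_exists_eq_two_mul]
  simp only [sr.injEq]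

theorem mem_zpowers_r_iff {m : ZMod n} (hm : m + m = 0) (x : DihedralGroup n) :
    x ∈ Subgroup.zpowers (r m) ↔ x = 1 ∨ x = r m := by
  rw [Subgroup.mem_zpowers_iff]
  constructor
  · rintro ⟨z, rfl⟩
    rcases Int.even_or_odd' z with ⟨q, rfl | rfl⟩
    · left; rw [r_zpow, one_def]; congr 1; push_cast; linear_combination (q : ZMod n) * hm
    · right; rw [r_zpow]; congr 1; push_cast; linear_combination (q : ZMod n) * hm
  · rintro (rfl | rfl)
    exacts [⟨0, zpow_zero _⟩, ⟨1, zpow_one _⟩]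

theorem exists_eq_r_of_mem_zpowers_r {m : ZMod n} {x : DihedralGroup n}
    (hx : x ∈ Subgroup.zpowers (r m)) : ∃ j, x = r j := by
  obtain ⟨z, rfl⟩ := Subgroup.mem_zpowers_iff.mp hx
  exact ⟨_, r_zpow m z⟩

theorem r_mem_union_diff_iff {Z A : Set (DihedralGroup n)} (t : ZMod n) :
    r t ∈ {x | IsConj (sr 0) x} ∪ (Z \ A) ↔ r t ∈ Z \ A :=
  or_iff_right (not_isConj_sr_zero_r t)

theorem sr_mem_union_diff_iff (hn : 2 ∣ n) {Z A : Set (DihedralGroup n)}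
    (hZrot : ∀ z ∈ Z, ∃ i, z = r i) (t : ZMod n) :
    sr t ∈ {x | IsConj (sr 0) x} ∪ (Z \ A) ↔ ZMod.castHom hn (ZMod 2) t = 0 := by
  rw [Set.mem_union, Set.mem_ofPred_eq, isConj_sr_zero_sr_iff hn, or_iff_left]
  rintro ⟨hZ, -⟩
  obtain ⟨i, ⟨⟩⟩ := hZrot _ hZ

theorem isNormalSet_union_diff {Z : Set (DihedralGroup n)} (hZrot : ∀ z ∈ Z, ∃ i, z = r i)
    (hZinv : ∀ z ∈ Z, z⁻¹ ∈ Z) (A : Subgroup (DihedralGroup n)) :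
    IsNormalSet ({x | IsConj (sr 0) x} ∪ (Z \ A)) :=
  (isNormalSet_setOf_isConj _).union <| isNormalSet_of_forall_eq_r (fun z hz => hZrot z hz.1)
    fun z hz => ⟨hZinv z hz.1, fun h => hz.2 (by simpa using A.inv_mem h)⟩

theorem existsUnique_r_mul_mem {m : ZMod n} {Z : Set (DihedralGroup n)}
    (hZtrans : ∀ i, ∃! z, z ∈ Z ∧ (r i)⁻¹ * z ∈ Subgroup.zpowers (r m))
    {i : ZMod n} (hi : r i ∉ Subgroup.zpowers (r m)) :
    ∃! u, u ∈ Subgroup.zpowers (r m) ∧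
      r i * u ∈ {x | IsConj (sr 0) x} ∪ (Z \ Subgroup.zpowers (r m)) := by
  obtain ⟨z, ⟨hzZ, hzA⟩, hz_unique⟩ := hZtrans i
  refine ⟨(r i)⁻¹ * z, ⟨hzA, ?_⟩, ?_⟩
  · rw [mul_inv_cancel_left]
    refine Or.inr ⟨hzZ, fun hz => hi ?_⟩
    simpa using mul_mem hz (inv_mem hzA)
  · rintro u ⟨huA, hu⟩
    obtain ⟨j, rfl⟩ := exists_eq_r_of_mem_zpowers_r huA
    rw [r_mul_r, r_mem_union_diff_iff] at hu
    refine eq_inv_mul_of_mul_eq (hz_unique _ ⟨hu.1, ?_⟩)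
    rwa [inv_mul_cancel_left]

theorem existsUnique_sr_mul_mem (hn : 2 ∣ n) {m : ZMod n}
    (hm1 : ZMod.castHom hn (ZMod 2) m = 1) (hmm : m + m = 0) {Z A : Set (DihedralGroup n)}
    (hZrot : ∀ z ∈ Z, ∃ i, z = r i) (i : ZMod n) :
    ∃! u, u ∈ Subgroup.zpowers (r m) ∧ sr i * u ∈ {x | IsConj (sr 0) x} ∪ (Z \ A) := by
  have h_one :
      sr i * 1 ∈ {x | IsConj (sr 0) x} ∪ (Z \ A) ↔ ZMod.castHom hn (ZMod 2) i = 0 := by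
    rw [mul_one, sr_mem_union_diff_iff hn hZrot]
  have h_rm :
      sr i * r m ∈ {x | IsConj (sr 0) x} ∪ (Z \ A) ↔ ZMod.castHom hn (ZMod 2) i ≠ 0 := by
    rw [sr_mul_r, sr_mem_union_diff_iff hn hZrot, map_add, hm1]
    generalize ZMod.castHom hn (ZMod 2) i = p
    revert p; decide
  simp only [mem_zpowers_r_iff hmm]
  by_cases hi : ZMod.castHom hn (ZMod 2) i = 0
  · refine ⟨1, ⟨Or.inl rfl, h_one.mpr hi⟩, ?_⟩
    rintro u ⟨rfl | rfl, hu⟩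
    exacts [rfl, absurd hi (h_rm.mp hu)]
  · refine ⟨r m, ⟨Or.inr rfl, h_rm.mpr hi⟩, ?_⟩
    rintro u ⟨rfl | rfl, hu⟩
    exacts [absurd (h_one.mp hu) hi, rfl]

theorem isPerfectCode_caySum_zpowers_r (hn : 2 ∣ n) {m : ZMod n}
    (hm1 : ZMod.castHom hn (ZMod 2) m = 1) (hmm : m + m = 0) {Z : Set (DihedralGroup n)}
    (hZrot : ∀ z ∈ Z, ∃ i, z = r i) (hZinv : ∀ z ∈ Z, z⁻¹ ∈ Z)
    (hZtrans : ∀ i, ∃! z, z ∈ Z ∧ (r i)⁻¹ * z ∈ Subgroup.zpowers (r m)) :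
    IsPerfectCode
      (caySum (DihedralGroup n) ({x | IsConj (sr 0) x} ∪ (Z \ Subgroup.zpowers (r m))))
      (Subgroup.zpowers (r m)) := by
  refine isPerfectCode_caySum_subgroup (isNormalSet_union_diff hZrot hZinv _) _
    (fun x hx hxX => ?_) fun v hv => ?_
  · obtain ⟨j, rfl⟩ := exists_eq_r_of_mem_zpowers_r hx
    exact ((r_mem_union_diff_iff j).mp hxX).2 hx
  · rcases v with i | i
    exacts [existsUnique_r_mul_mem hZtrans hv, existsUnique_sr_mul_mem hn hm1 hmm hZrot i]

end DihedralGroup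

open DihedralGroup in
theorem dihedral_perfectCode_general {k : ℕ}
    (A : Subgroup (DihedralGroup (4 * k + 2)))
    (hA : A = Subgroup.zpowers (DihedralGroup.r (2 * k + 1 : ZMod (4 * k + 2))))
    (Z : Set (DihedralGroup (4 * k + 2)))
    (hZrot : ∀ z ∈ Z, ∃ i, z = DihedralGroup.r i)
    (hZinv : ∀ z ∈ Z, z⁻¹ ∈ Z)
    (hZtrans : ∀ g : DihedralGroup (4 * k + 2), (∃ i, g = DihedralGroup.r i) →
      ∃! z, z ∈ Z ∧ g⁻¹ * z ∈ A)
    (X : Set (DihedralGroup (4 * k + 2)))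
    (hXdef : X = {x | IsConj (DihedralGroup.sr 0) x} ∪ (Z \ (A : Set _))) :
    IsNormalSet X ∧ IsPerfectCode (caySum (DihedralGroup (4 * k + 2)) X) (A : Set _) := by
  subst hA hXdef
  have hn : 2 ∣ 4 * k + 2 := ⟨2 * k + 1, by ring⟩
  have hm1 : ZMod.castHom hn (ZMod 2) (2 * k + 1) = 1 := by
    rw [map_add, map_mul, map_ofNat, map_one, show (2 : ZMod 2) = 0 from rfl, zero_mul, zero_add]
  have hmm : (2 * k + 1 : ZMod (4 * k + 2)) + (2 * k + 1) = 0 := by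
    have h := ZMod.natCast_self (4 * k + 2)
    push_cast at h
    linear_combination h
  exact ⟨isNormalSet_union_diff hZrot hZinv _,
    isPerfectCode_caySum_zpowers_r hn hm1 hmm hZrot hZinv fun i => hZtrans _ ⟨i, rfl⟩⟩

theorem dihedral_perfectCode {k : ℕ} (hk : 0 < k)
    (A : Subgroup (DihedralGroup (4 * k + 2)))
    (hA : A = Subgroup.zpowers (DihedralGroup.r (2 * k + 1 : ZMod (4 * k + 2))))
    (Z : Set (DihedralGroup (4 * k + 2)))
    (hZrot : ∀ z ∈ Z, ∃ i, z = DihedralGroup.r i)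
    (hZinv : ∀ z ∈ Z, z⁻¹ ∈ Z)
    (hZtrans : ∀ g : DihedralGroup (4 * k + 2), (∃ i, g = DihedralGroup.r i) →
      ∃! z, z ∈ Z ∧ g⁻¹ * z ∈ A)
    (X : Set (DihedralGroup (4 * k + 2)))
    (hXdef : X = {x | IsConj (DihedralGroup.sr 0) x} ∪ (Z \ (A : Set _))) :
    IsNormalSet X ∧ IsPerfectCode (caySum (DihedralGroup (4 * k + 2)) X) (A : Set _) :=
  dihedral_perfectCode_general A hA Z hZrot hZinv hZtrans X hXdef
end

section
/- Let G = AGL₁(q) with Frobenius complement C = ⟨c⟩ of order q - 1, and write q - 1 = st with t > 1. Let {a₀, a₁, ..., a_{s-1}} be a left transversal of ⟨c^s⟩ in C with a₀ ∈ ⟨c^s⟩ \ {1}, let K be the Frobenius kernel, and set X = (⋃_{i=1}^{s-1} a_i^G) ∪ (K \ {1}), where a_i^G denotes the conjugacy class of a_i. Then ⟨c^s⟩ is a perfect code of the Cayley sum graph CS(G, X). -/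
namespace AGLaux
variable {F : Type*} [Field F]

def m (f : F ≃ᵃ[F] F) : F := f 1 - f 0

lemma apply_eq (f : F ≃ᵃ[F] F) (x : F) : f x = x * m f + f 0 := by
  have h1 : f x = f.linear x + f 0 := by
    have := f.toAffineMap.map_vadd 0 x; simpa using this
  have h2 : f.linear x = x * f.linear 1 := by
    have := f.linear.map_smul x 1; simpa [smul_eq_mul] using this
  have h3 : f 1 = f.linear 1 + f 0 := by
    have := f.toAffineMap.map_vadd 0 1; simpa using this
  rw [h1, h2, m, h3]; ring

lemma ext_of {f g : F ≃ᵃ[F] F} (h0 : f 0 = g 0) (hm : m f = m g) : f = g := by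
  ext x; rw [apply_eq f x, h0, hm, ← apply_eq g x]

lemma m_one : m (1 : F ≃ᵃ[F] F) = 1 := by simp [m]

lemma m_mul (f g : F ≃ᵃ[F] F) : m (f * g) = m f * m g := by
  have h1 : (f * g) 1 = f (g 1) := rfl
  have h0 : (f * g) 0 = f (g 0) := rfl
  rw [m, h1, h0, apply_eq f (g 1), apply_eq f (g 0), m, m]; ring

lemma m_ne_zero (f : F ≃ᵃ[F] F) : m f ≠ 0 := by
  intro h
  have hf : f 1 = f 0 := by rw [m] at h; linear_combination h
  exact one_ne_zero (f.injective hf)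

lemma m_inv (f : F ≃ᵃ[F] F) : m f⁻¹ = (m f)⁻¹ := by
  have h := m_mul f f⁻¹
  rw [mul_inv_cancel, m_one] at h
  exact eq_inv_of_mul_eq_one_right h.symm

lemma m_isConj {f g : F ≃ᵃ[F] F} (h : IsConj f g) : m g = m f := by
  obtain ⟨u, hu⟩ := isConj_iff.mp h
  rw [← hu, m_mul, m_mul, m_inv]
  field_simp [m_ne_zero u]

lemma isConj_of_m {f g : F ≃ᵃ[F] F} (hm : m g = m f) (h1 : m f ≠ 1) : IsConj f g := by
  rw [isConj_iff]
  set δ : F := (g 0 - f 0) / (1 - m f) with hδ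
  refine ⟨AffineEquiv.constVAdd F F δ, ?_⟩
  have hne : (1 : F) - m f ≠ 0 := sub_ne_zero.mpr (Ne.symm h1)
  ext x
  have hinv : (AffineEquiv.constVAdd F F δ)⁻¹ = AffineEquiv.constVAdd F F (-δ) := by
    ext y; rfl
  show (AffineEquiv.constVAdd F F δ) (f ((AffineEquiv.constVAdd F F δ)⁻¹ x)) = g x
  rw [hinv]
  show δ + f (-δ + x) = g x
  rw [apply_eq f (-δ + x), apply_eq g x, hm]
  field_simp [hδ]
  have hδ' : δ * (1 - m f) = g 0 - f 0 := by rw [hδ]; exact div_mul_cancel₀ _ hne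
  linear_combination hδ'

end AGLaux

theorem AGL_perfectCode {F : Type*} [Field F] [Fintype F]
    (c : F ≃ᵃ[F] F)
    (hC : ∀ f : F ≃ᵃ[F] F, f ∈ Subgroup.zpowers c ↔ f 0 = 0)
    (horder : orderOf c = Fintype.card F - 1)
    (s t : ℕ) (ht : 1 < t) (hs : 0 < s) (hst : Fintype.card F - 1 = s * t)
    (a : Fin s → (F ≃ᵃ[F] F))
    (ha0 : a ⟨0, hs⟩ ∈ Subgroup.zpowers (c ^ s)) (ha0' : a ⟨0, hs⟩ ≠ 1)
    (haC : ∀ i, a i ∈ Subgroup.zpowers c)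
    (htrans : ∀ g ∈ Subgroup.zpowers c, ∃! i : Fin s, g⁻¹ * a i ∈ Subgroup.zpowers (c ^ s))
    (K : Set (F ≃ᵃ[F] F)) (hK : K = {f | ∃ β : F, ∀ x, f x = x + β})
    (X : Set (F ≃ᵃ[F] F))
    (hX : X = (⋃ i ∈ {i : Fin s | i ≠ ⟨0, hs⟩}, {x | IsConj (a i) x}) ∪ (K \ {1})) :
    IsPerfectCode (caySum (F ≃ᵃ[F] F) X)
      ((Subgroup.zpowers (c ^ s) : Subgroup (F ≃ᵃ[F] F)) : Set _) := by
  classical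
  open AGLaux in
  set H : Subgroup (F ≃ᵃ[F] F) := Subgroup.zpowers (c ^ s) with hH
  set i₀ : Fin s := ⟨0, hs⟩ with hi0def
  -- H ⊆ C
  have hHle : H ≤ Subgroup.zpowers c :=
    Subgroup.zpowers_le.mpr ((Subgroup.zpowers c).pow_mem (Subgroup.mem_zpowers c) s)
  have hH0 : ∀ f ∈ H, f 0 = 0 := fun f hf => (hC f).mp (hHle hf)
  have ha_zero : ∀ i, a i 0 = 0 := fun i => (hC (a i)).mp (haC i)
  -- K membership
  have hK_iff : ∀ f : F ≃ᵃ[F] F, f ∈ K ↔ m f = 1 := by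
    intro f
    rw [hK]
    constructor
    · rintro ⟨β, hβ⟩
      simp [AGLaux.m, hβ]
    · intro hm
      exact ⟨f 0, fun x => by rw [apply_eq f x, hm]; ring⟩
  have hone_iff : ∀ f : F ≃ᵃ[F] F, f = 1 ↔ (f 0 = 0 ∧ m f = 1) := by
    intro f
    constructor
    · rintro rfl; exact ⟨rfl, m_one⟩
    · rintro ⟨h0, hm⟩
      exact ext_of (by simpa using h0) (by rw [hm, m_one])
  -- index uniqueness at 1
  have hidx1 : ∀ i, a i ∈ H → i = i₀ := by
    intro i hi
    obtain ⟨j, -, hju⟩ := htrans 1 (one_mem _)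
    have e1 : i = j := hju i (by simpa using hi)
    have e0 : i₀ = j := hju i₀ (by simpa using ha0)
    rw [e1, e0]
  have haiH : ∀ i, i ≠ i₀ → a i ∉ H := fun i hi h => hi (hidx1 i h)
  have hai1 : ∀ i, i ≠ i₀ → m (a i) ≠ 1 := by
    intro i hi hm
    have : a i = 1 := (hone_iff (a i)).mpr ⟨ha_zero i, hm⟩
    exact haiH i hi (this ▸ one_mem H)
  -- membership in X
  have hXmem : ∀ f : F ≃ᵃ[F] F,
      f ∈ X ↔ ((∃ i, i ≠ i₀ ∧ m f = m (a i)) ∨ (m f = 1 ∧ f 0 ≠ 0)) := by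
    intro f
    rw [hX]
    simp only [Set.mem_union, Set.mem_iUnion, Set.mem_setOf_eq, Set.mem_diff,
      Set.mem_singleton_iff, exists_prop]
    constructor
    · rintro (⟨i, hi, hconj⟩ | ⟨hfK, hf1⟩)
      · exact Or.inl ⟨i, hi, m_isConj hconj⟩
      · refine Or.inr ⟨(hK_iff f).mp hfK, fun h0 => hf1 ?_⟩
        exact (hone_iff f).mpr ⟨h0, (hK_iff f).mp hfK⟩
    · rintro (⟨i, hi, hm⟩ | ⟨hm, h0⟩)
      · exact Or.inl ⟨i, hi, isConj_of_m hm (hai1 i hi)⟩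
      · refine Or.inr ⟨(hK_iff f).mpr hm, fun h1 => h0 ?_⟩
        rw [h1]; rfl
  -- H is disjoint from X
  have hHX : ∀ f ∈ H, f ∉ X := by
    intro f hf hfX
    rcases (hXmem f).mp hfX with ⟨i, hi, hm⟩ | ⟨-, h0⟩
    · have : f = a i := ext_of (by rw [hH0 f hf, ha_zero i]) hm
      exact haiH i hi (this ▸ hf)
    · exact h0 (hH0 f hf)
  -- adjacency unfolding
  have hAdj : ∀ g h : F ≃ᵃ[F] F,
      (caySum (F ≃ᵃ[F] F) X).Adj g h ↔ g ≠ h ∧ (g * h ∈ X ∨ h * g ∈ X) := by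
    intro g h
    rfl
  constructor
  · -- no two code vertices adjacent
    intro u hu v hv hadj
    rw [hAdj] at hadj
    rcases hadj.2 with h | h
    · exact hHX _ (mul_mem hu hv) h
    · exact hHX _ (mul_mem hv hu) h
  · -- every vertex outside has a unique neighbour in the code
    intro v hv
    have hvH : v ∉ H := hv
    -- the "C-part" of v
    set β : F := v 0 with hβ
    set w : F ≃ᵃ[F] F := v.trans (AffineEquiv.constVAdd F F (-β)) with hwdef
    have hw : ∀ x, w x = -β + v x := fun x => rfl
    have hw0 : w 0 = 0 := by rw [hw 0, ← hβ]; ring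
    have hwm : m w = m v := by
      simp only [AGLaux.m, hw 1, hw 0]; ring
    have hwC : w ∈ Subgroup.zpowers c := (hC w).mpr hw0
    -- adjacency characterization for u ∈ H
    have hchar : ∀ u, u ∈ H →
        ((caySum (F ≃ᵃ[F] F) X).Adj v u ↔
          ((∃ i, i ≠ i₀ ∧ u = w⁻¹ * a i) ∨ (u = w⁻¹ ∧ β ≠ 0))) := by
      intro u hu
      have hu0 : u 0 = 0 := hH0 u hu
      have hvu : v ≠ u := fun h => hvH (h ▸ hu)
      have hm_vu : m (v * u) = m w * m u := by rw [m_mul, hwm]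
      have hm_uv : m (u * v) = m w * m u := by rw [m_mul, hwm]; ring
      have h0_vu : (v * u) 0 = β := by
        show v (u 0) = β; rw [hu0, hβ]
      have h0_uv : (u * v) 0 = β * m u := by
        show u (v 0) = β * m u; rw [apply_eq u (v 0), hu0, hβ]; ring
      have hwu0 : (w * u) 0 = 0 := by show w (u 0) = 0; rw [hu0, hw0]
      -- translate multiplier equations into equations in the group
      have key1 : ∀ i, m w * m u = m (a i) ↔ u = w⁻¹ * a i := by
        intro i
        constructor
        · intro hmm
          have : w * u = a i := ext_of (by rw [hwu0, ha_zero i]) (by rw [m_mul, hmm])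
          rw [← this]; group
        · intro hui
          have : w * u = a i := by rw [hui]; group
          rw [← m_mul, this]
      have key2 : m w * m u = 1 ↔ u = w⁻¹ := by
        constructor
        · intro hmm
          have : w * u = 1 := ext_of (by simpa using hwu0) (by rw [m_mul, hmm, m_one])
          rw [← mul_eq_one_iff_inv_eq.mp this]
        · intro hui
          have hwu1 : w * u = 1 := by rw [hui]; group
          rw [← m_mul, hwu1, m_one]
      rw [hAdj]
      constructor
      · rintro ⟨-, hX' | hX'⟩
        · rcases (hXmem _).mp hX' with ⟨i, hi, hm⟩ | ⟨hm, h0⟩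
          · rw [hm_vu] at hm
            exact Or.inl ⟨i, hi, (key1 i).mp hm⟩
          · rw [hm_vu] at hm
            rw [h0_vu] at h0
            exact Or.inr ⟨key2.mp hm, h0⟩
        · rcases (hXmem _).mp hX' with ⟨i, hi, hm⟩ | ⟨hm, h0⟩
          · rw [hm_uv] at hm
            exact Or.inl ⟨i, hi, (key1 i).mp hm⟩
          · rw [hm_uv] at hm
            rw [h0_uv] at h0
            have hβne : β ≠ 0 := fun h => h0 (by rw [h]; ring)
            exact Or.inr ⟨key2.mp hm, hβne⟩
      · rintro (⟨i, hi, hui⟩ | ⟨hui, hβne⟩)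
        · refine ⟨hvu, Or.inl ?_⟩
          rw [hXmem]
          exact Or.inl ⟨i, hi, by rw [hm_vu]; exact (key1 i).mpr hui⟩
        · refine ⟨hvu, Or.inl ?_⟩
          rw [hXmem]
          refine Or.inr ⟨by rw [hm_vu]; exact key2.mpr hui, by rw [h0_vu]; exact hβne⟩
    -- now the existence and uniqueness
    by_cases hwH : w ∈ H
    · -- then β ≠ 0, candidate w⁻¹
      have hβne : β ≠ 0 := by
        intro h
        apply hvH
        have : v = w := ext_of (by rw [hw0, ← hβ, h]) hwm.symm
        exact this ▸ hwH
      refine ⟨w⁻¹, ⟨inv_mem hwH, ?_⟩, ?_⟩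
      · rw [hchar w⁻¹ (inv_mem hwH)]
        exact Or.inr ⟨rfl, hβne⟩
      · rintro u' ⟨hu'H, hu'adj⟩
        rw [hchar u' hu'H] at hu'adj
        rcases hu'adj with ⟨i, hi, hui⟩ | ⟨hui, -⟩
        · exfalso
          apply haiH i hi
          have : a i = w * u' := by rw [hui]; group
          exact this ▸ mul_mem hwH hu'H
        · exact hui
    · -- w ∉ H: use the transversal property
      obtain ⟨j, hj, hjuniq⟩ := htrans w hwC
      have hjne : j ≠ i₀ := by
        intro h
        apply hwH
        have h1 : w⁻¹ * a i₀ ∈ H := h ▸ hj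
        have h2 : w⁻¹ ∈ H := by
          have := mul_mem h1 (inv_mem ha0)
          simpa [mul_assoc] using this
        simpa using inv_mem h2
      refine ⟨w⁻¹ * a j, ⟨hj, ?_⟩, ?_⟩
      · rw [hchar _ hj]
        exact Or.inl ⟨j, hjne, rfl⟩
      · rintro u' ⟨hu'H, hu'adj⟩
        rw [hchar u' hu'H] at hu'adj
        rcases hu'adj with ⟨i, hi, hui⟩ | ⟨hui, -⟩
        · rw [hui]
          have : i = j := hjuniq i (show w⁻¹ * a i ∈ H from hui ▸ hu'H)
          rw [this]
        · exfalso
          apply hwH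
          have : w⁻¹ ∈ H := hui ▸ hu'H
          simpa using inv_mem this
end
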